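/- Identify F_27 with F_3[β]/(β³ + 2β + 1) and set y = β². The permutation f' of F_27 defined by f'(0) = 1, f'(1) = 0, f'(−1) = y⁻¹, f'(y) = −1, and f'(x) = x⁻¹ for all other x is an AP-destroying permutation of F_27. -/
import Mathlib


open Polynomial

/-- The polynomial `β³ + 2β + 1` over `F_3`, so that `F_27 = F_3[β]/(β³ + 2β + 1)`. -/
noncomputable def f27Poly : Polynomial (ZMod 3) := X ^ 3 + 2 * X + 1

structure F27c where
  a : ZMod 3
  b : ZMod 3
  c : ZMod 3
deriving DecidableEq, Fintype
namespace F27c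
def add (x y : F27c) : F27c := ⟨x.a + y.a, x.b + y.b, x.c + y.c⟩
def neg (x : F27c) : F27c := ⟨-x.a, -x.b, -x.c⟩
def mul (x y : F27c) : F27c :=
  ⟨x.a*y.a - (x.b*y.c + x.c*y.b),
   x.a*y.b + x.b*y.a + (x.b*y.c + x.c*y.b) - x.c*y.c,
   x.a*y.c + x.b*y.b + x.c*y.a + x.c*y.c⟩
instance : Zero F27c := ⟨⟨0,0,0⟩⟩
instance : One F27c := ⟨⟨1,0,0⟩⟩
instance : Add F27c := ⟨add⟩
instance : Neg F27c := ⟨neg⟩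
instance : Mul F27c := ⟨mul⟩

lemma ladd_assoc : ∀ x y z : F27c, x + y + z = x + (y + z) := by
  rintro ⟨a0,a1,a2⟩ ⟨b0,b1,b2⟩ ⟨c0,c1,c2⟩
  show add (add _ _) _ = add _ (add _ _)
  simp only [add, mk.injEq]; refine ⟨by ring, by ring, by ring⟩
lemma lzero_add : ∀ x : F27c, 0 + x = x := by
  rintro ⟨a0,a1,a2⟩
  show add ⟨0,0,0⟩ _ = _
  simp only [add, mk.injEq]; refine ⟨by ring, by ring, by ring⟩
lemma ladd_zero : ∀ x : F27c, x + 0 = x := by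
  rintro ⟨a0,a1,a2⟩
  show add _ ⟨0,0,0⟩ = _
  simp only [add, mk.injEq]; refine ⟨by ring, by ring, by ring⟩
lemma ladd_comm : ∀ x y : F27c, x + y = y + x := by
  rintro ⟨a0,a1,a2⟩ ⟨b0,b1,b2⟩
  show add _ _ = add _ _
  simp only [add, mk.injEq]; refine ⟨by ring, by ring, by ring⟩
lemma lneg_add_cancel : ∀ x : F27c, -x + x = 0 := by
  rintro ⟨a0,a1,a2⟩
  show add (neg _) _ = ⟨0,0,0⟩
  simp only [add, neg, mk.injEq]; refine ⟨by ring, by ring, by ring⟩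
lemma lmul_assoc : ∀ x y z : F27c, x * y * z = x * (y * z) := by
  rintro ⟨a0,a1,a2⟩ ⟨b0,b1,b2⟩ ⟨c0,c1,c2⟩
  show mul (mul _ _) _ = mul _ (mul _ _)
  simp only [mul, mk.injEq]; refine ⟨by ring, by ring, by ring⟩
lemma lone_mul : ∀ x : F27c, 1 * x = x := by
  rintro ⟨a0,a1,a2⟩
  show mul ⟨1,0,0⟩ _ = _
  simp only [mul, mk.injEq]; refine ⟨by ring, by ring, by ring⟩
lemma lmul_one : ∀ x : F27c, x * 1 = x := by
  rintro ⟨a0,a1,a2⟩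
  show mul _ ⟨1,0,0⟩ = _
  simp only [mul, mk.injEq]; refine ⟨by ring, by ring, by ring⟩
lemma lleft_distrib : ∀ x y z : F27c, x * (y + z) = x * y + x * z := by
  rintro ⟨a0,a1,a2⟩ ⟨b0,b1,b2⟩ ⟨c0,c1,c2⟩
  show mul _ (add _ _) = add (mul _ _) (mul _ _)
  simp only [mul, add, mk.injEq]; refine ⟨by ring, by ring, by ring⟩
lemma lright_distrib : ∀ x y z : F27c, (x + y) * z = x * z + y * z := by
  rintro ⟨a0,a1,a2⟩ ⟨b0,b1,b2⟩ ⟨c0,c1,c2⟩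
  show mul (add _ _) _ = add (mul _ _) (mul _ _)
  simp only [mul, add, mk.injEq]; refine ⟨by ring, by ring, by ring⟩
lemma lzero_mul : ∀ x : F27c, 0 * x = 0 := by
  rintro ⟨a0,a1,a2⟩
  show mul ⟨0,0,0⟩ _ = ⟨0,0,0⟩
  simp only [mul, mk.injEq]; refine ⟨by ring, by ring, by ring⟩
lemma lmul_zero : ∀ x : F27c, x * 0 = 0 := by
  rintro ⟨a0,a1,a2⟩
  show mul _ ⟨0,0,0⟩ = ⟨0,0,0⟩
  simp only [mul, mk.injEq]; refine ⟨by ring, by ring, by ring⟩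
lemma lmul_comm : ∀ x y : F27c, x * y = y * x := by
  rintro ⟨a0,a1,a2⟩ ⟨b0,b1,b2⟩
  show mul _ _ = mul _ _
  simp only [mul, mk.injEq]; refine ⟨by ring, by ring, by ring⟩

instance : CommRing F27c where
  add_assoc := ladd_assoc
  zero_add := lzero_add
  add_zero := ladd_zero
  add_comm := ladd_comm
  neg_add_cancel := lneg_add_cancel
  mul_assoc := lmul_assoc
  one_mul := lone_mul
  mul_one := lmul_one
  left_distrib := lleft_distrib
  right_distrib := lright_distrib
  zero_mul := lzero_mul
  mul_zero := lmul_zero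
  mul_comm := lmul_comm
  nsmul := nsmulRec
  zsmul := zsmulRec
/-- Inverse, by lookup table (computed as `x ^ 25`). -/
def inv (x : F27c) : F27c :=
  if x = ⟨0,0,0⟩ then ⟨0,0,0⟩ else
  if x = ⟨0,0,1⟩ then ⟨1,2,2⟩ else
  if x = ⟨0,0,2⟩ then ⟨2,1,1⟩ else
  if x = ⟨0,1,0⟩ then ⟨1,0,2⟩ else
  if x = ⟨0,1,1⟩ then ⟨1,2,0⟩ else
  if x = ⟨0,1,2⟩ then ⟨1,1,0⟩ else
  if x = ⟨0,2,0⟩ then ⟨2,0,1⟩ else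
  if x = ⟨0,2,1⟩ then ⟨2,2,0⟩ else
  if x = ⟨0,2,2⟩ then ⟨2,1,0⟩ else
  if x = ⟨1,0,0⟩ then ⟨1,0,0⟩ else
  if x = ⟨1,0,1⟩ then ⟨2,1,2⟩ else
  if x = ⟨1,0,2⟩ then ⟨0,1,0⟩ else
  if x = ⟨1,1,0⟩ then ⟨0,1,2⟩ else
  if x = ⟨1,1,1⟩ then ⟨1,1,2⟩ else
  if x = ⟨1,1,2⟩ then ⟨1,1,1⟩ else
  if x = ⟨1,2,0⟩ then ⟨0,1,1⟩ else
  if x = ⟨1,2,1⟩ then ⟨2,0,2⟩ else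
  if x = ⟨1,2,2⟩ then ⟨0,0,1⟩ else
  if x = ⟨2,0,0⟩ then ⟨2,0,0⟩ else
  if x = ⟨2,0,1⟩ then ⟨0,2,0⟩ else
  if x = ⟨2,0,2⟩ then ⟨1,2,1⟩ else
  if x = ⟨2,1,0⟩ then ⟨0,2,2⟩ else
  if x = ⟨2,1,1⟩ then ⟨0,0,2⟩ else
  if x = ⟨2,1,2⟩ then ⟨1,0,1⟩ else
  if x = ⟨2,2,0⟩ then ⟨0,2,1⟩ else
  if x = ⟨2,2,1⟩ then ⟨2,2,2⟩ else
  if x = ⟨2,2,2⟩ then ⟨2,2,1⟩ else ⟨0,0,0⟩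
instance : Inv F27c := ⟨inv⟩
set_option maxHeartbeats 1000000 in
instance : Field F27c where
  exists_pair_ne := ⟨0, 1, by decide⟩
  mul_inv_cancel := by decide
  inv_zero := by decide
  nnqsmul := _
  qsmul := _
def rt : F27c := ⟨0,1,0⟩
def yF : F27c := ⟨0,0,1⟩
noncomputable def gF : F27c → F27c := fun x =>
  if x = 0 then 1 else if x = 1 then 0 else if x = -1 then yF⁻¹
  else if x = yF then -1 else x⁻¹
lemma gF_def (x : F27c) : gF x =
  if x = 0 then 1 else if x = 1 then 0 else if x = -1 then yF⁻¹
  else if x = yF then -1 else x⁻¹ := rfl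
set_option maxHeartbeats 4000000 in
lemma gF_inj : Function.Injective gF := by
  intro x y
  show (if x = 0 then 1 else if x = 1 then 0 else if x = -1 then yF⁻¹
      else if x = yF then -1 else x⁻¹) =
    (if y = 0 then 1 else if y = 1 then 0 else if y = -1 then yF⁻¹
      else if y = yF then -1 else y⁻¹) → x = y
  revert x y
  decide
set_option maxHeartbeats 8000000 in
lemma gF_ap : ∀ a b c : F27c, b - a = c - b → b - a ≠ 0 →
    gF b - gF a ≠ gF c - gF b := by
  intro a b c h
  rw [show c = b + (b - a) by rw [h]; ring]
  show b - a ≠ 0 → ¬ ((if b = 0 then 1 else if b = 1 then 0 else if b = -1 then yF⁻¹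
      else if b = yF then -1 else b⁻¹) -
    (if a = 0 then 1 else if a = 1 then 0 else if a = -1 then yF⁻¹
      else if a = yF then -1 else a⁻¹) =
    (if b + (b-a) = 0 then 1 else if b + (b-a) = 1 then 0 else if b + (b-a) = -1 then yF⁻¹
      else if b + (b-a) = yF then -1 else (b + (b-a))⁻¹) -
    (if b = 0 then 1 else if b = 1 then 0 else if b = -1 then yF⁻¹
      else if b = yF then -1 else b⁻¹))
  clear h
  revert a b
  decide
end F27c

namespace F27c

/-- The ring hom `ZMod 3 →+* F27c`. -/
def emb : ZMod 3 →+* F27c where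
  toFun n := ⟨n, 0, 0⟩
  map_one' := rfl
  map_mul' := by decide
  map_zero' := rfl
  map_add' := by decide

lemma eval_root : f27Poly.eval₂ emb rt = 0 := by
  simp only [f27Poly, eval₂_add, eval₂_mul, eval₂_pow, eval₂_X, eval₂_one, eval₂_ofNat]
  decide

end F27c

lemma f27Poly_natDegree : f27Poly.natDegree = 3 := by
  unfold f27Poly
  compute_degree!

set_option maxHeartbeats 1000000 in
set_option synthInstance.maxHeartbeats 400000 in
/-- In `F_27 = F_3[β]/(β³ + 2β + 1)` with `y = β²`, the permutation `f'` given by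
`f' 0 = 1`, `f' 1 = 0`, `f' (-1) = y⁻¹`, `f' y = -1` and `f' x = x⁻¹` otherwise
is an AP-destroying permutation of `F_27`. -/
theorem ap_destroying_perm_of_F27
    [Fact (Irreducible f27Poly)] [DecidableEq (AdjoinRoot f27Poly)]
    (y : AdjoinRoot f27Poly) (hy : y = AdjoinRoot.root f27Poly ^ 2)
    (f' : AdjoinRoot f27Poly → AdjoinRoot f27Poly)
    (hf' : ∀ x, f' x =
      if x = 0 then 1 else if x = 1 then 0 else if x = -1 then y⁻¹
      else if x = y then -1 else x⁻¹) :
    Function.Bijective f' ∧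
      ∀ a b c : AdjoinRoot f27Poly, b - a = c - b → b - a ≠ 0 →
        f' b - f' a ≠ f' c - f' b := by
  have hpne : f27Poly ≠ 0 := (Fact.out (p := Irreducible f27Poly)).ne_zero
  let pb := AdjoinRoot.powerBasis hpne
  haveI : Fintype (AdjoinRoot f27Poly) := Module.fintypeOfFintype pb.basis
  have hcard : Fintype.card (AdjoinRoot f27Poly) = 27 := by
    rw [Module.card_fintype pb.basis]
    simp [pb, AdjoinRoot.powerBasis, f27Poly_natDegree, ZMod.card]
  -- the ring hom to the concrete model
  let e0 : AdjoinRoot f27Poly →+* F27c := AdjoinRoot.lift F27c.emb F27c.rt F27c.eval_root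
  have hbij : Function.Bijective e0 := by
    rw [Fintype.bijective_iff_injective_and_card]
    exact ⟨e0.injective, by rw [hcard]; decide⟩
  let e : AdjoinRoot f27Poly ≃+* F27c := RingEquiv.ofBijective e0 hbij
  have hroot : e (AdjoinRoot.root f27Poly) = F27c.rt := AdjoinRoot.lift_root F27c.eval_root
  have hey : e y = F27c.yF := by
    rw [hy, map_pow, hroot]
    decide
  -- conditions transfer
  have ceq : ∀ (t : AdjoinRoot f27Poly) (x : AdjoinRoot f27Poly),
      (e x = e t) = (x = t) := fun t x =>
    propext ⟨fun h => e.injective h, fun h => by rw [h]⟩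
  have hg : ∀ x, e (f' x) = F27c.gF (e x) := by
    intro x
    rw [hf' x, F27c.gF_def]
    rw [show (-1 : F27c) = e (-1) by rw [map_neg, map_one],
      show (0 : F27c) = e 0 by rw [map_zero], show (1 : F27c) = e 1 by rw [map_one], ← hey]
    simp only [ceq 0 x, ceq 1 x, ceq (-1) x, ceq y x]
    split_ifs
    all_goals first
      | rfl | rw [map_one] | rw [map_zero] | rw [map_inv₀] | rw [map_neg, map_one]
  constructor
  · have hf'eq : f' = e.symm ∘ F27c.gF ∘ e := by
      funext x
      have := hg x
      simp only [Function.comp_apply, ← this, RingEquiv.symm_apply_apply]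
    rw [hf'eq]
    have hgbij : Function.Bijective F27c.gF :=
      Finite.injective_iff_bijective.mp F27c.gF_inj
    exact (e.symm.bijective.comp hgbij).comp e.bijective
  · intro a b c h1 h2 hcon
    refine F27c.gF_ap (e a) (e b) (e c) ?_ ?_ ?_
    · rw [← map_sub, ← map_sub, h1]
    · rw [← map_sub]
      intro h
      exact h2 (e.injective (by rw [h, map_zero]))
    · rw [← hg, ← hg, ← hg, ← map_sub, ← map_sub, hcon]
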